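/- Let (Ω,μ) be a measure space and (Ω',ν) a finite measure space, let A : L¹(μ) → L^∞(ν) be a continuous linear operator satisfying, for some c > 0, ∫ Av dν ≥ c·∫ v dμ for every v ∈ L¹(μ) with v ≥ 0, and let A^l : L¹(μ) → L^∞(ν) be a continuous linear operator with ‖A − A^l‖ ≤ η in the L¹(μ) → L^∞(ν) operator norm, where η·ν(Ω') < c. Then every u ∈ L¹(μ) with u ≥ 0 and A^l u ≤ f^u for some f^u ∈ L^∞(ν) satisfies ‖u‖₁ ≤ (∫ f^u dν)/(c − η·ν(Ω')). In particular, all elements of the feasible set {u ≥ 0 : A^l u ≤ f^u} are uniformly bounded in L¹(μ). -/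

import Mathlib

open MeasureTheory
open scoped ENNReal

/-!
For `u ≥ 0` the hypothesis on `A` gives `c‖u‖₁ = c∫u ≤ ∫ Au`. Splitting `Au = A^l u + (A - A^l)u`,
the first part integrates to at most `∫ f^u`, while the second is bounded a.e. by `η‖u‖₁` and so
integrates to at most `η‖u‖₁ν(Ω')`. Hence `(c - ην(Ω'))‖u‖₁ ≤ ∫ f^u`, and the gap `c - ην(Ω') > 0`
can be divided by.
-/

namespace MeasureTheory

variable {α : Type*} [MeasurableSpace α] {μ : Measure α}

theorem L1.norm_eq_integral_of_nonneg {f : Lp ℝ 1 μ} (hf : 0 ≤ f) : ‖f‖ = ∫ x, f x ∂μ := by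
  rw [L1.norm_eq_integral_norm]
  refine integral_congr_ae ?_
  filter_upwards [(Lp.coeFn_nonneg f).2 hf] with x hx
  exact Real.norm_of_nonneg hx

namespace Lp

theorem ae_norm_le_norm_top {E : Type*} [NormedAddCommGroup E] (f : Lp E ∞ μ) :
    ∀ᵐ x ∂μ, ‖f x‖ ≤ ‖f‖ := by
  filter_upwards [ae_le_eLpNormEssSup (f := (f : α → E)) (μ := μ)] with x hx
  rw [Lp.norm_def, ← eLpNorm_exponent_top, ← ofReal_norm] at *
  exact ENNReal.ofReal_le_iff_le_toReal (Lp.eLpNorm_ne_top f) |>.1 hx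

variable [IsFiniteMeasure μ]

theorem integrable_of_top {E : Type*} [NormedAddCommGroup E] (f : Lp E ∞ μ) : Integrable f μ :=
  (Lp.memLp f).integrable le_top

theorem integral_le_norm_mul_measureReal_univ (f : Lp ℝ ∞ μ) :
    ∫ x, f x ∂μ ≤ ‖f‖ * μ.real Set.univ :=
  (le_abs_self _).trans (norm_integral_le_of_norm_le_const (ae_norm_le_norm_top f))

theorem integral_mono_of_top {f g : Lp ℝ ∞ μ} (h : f ≤ g) : ∫ x, f x ∂μ ≤ ∫ x, g x ∂μ :=
  integral_mono_ae (integrable_of_top f) (integrable_of_top g) ((Lp.coeFn_le f g).2 h)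

theorem integral_sub_of_top (f g : Lp ℝ ∞ μ) :
    ∫ x, (f - g) x ∂μ = ∫ x, f x ∂μ - ∫ x, g x ∂μ := by
  rw [integral_congr_ae (Lp.coeFn_sub f g)]
  exact integral_sub (integrable_of_top f) (integrable_of_top g)

end Lp

theorem integral_apply_le_integral_apply_add {E : Type*} [NormedAddCommGroup E] [NormedSpace ℝ E]
    [IsFiniteMeasure μ] (T S : E →L[ℝ] Lp ℝ ∞ μ) (x : E) :
    ∫ y, T x y ∂μ ≤ ∫ y, S x y ∂μ + ‖T - S‖ * ‖x‖ * μ.real Set.univ := by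
  have hdiff : ∫ y, T x y ∂μ - ∫ y, S x y ∂μ ≤ ‖(T - S) x‖ * μ.real Set.univ := by
    rw [← Lp.integral_sub_of_top]
    exact Lp.integral_le_norm_mul_measureReal_univ ((T - S) x)
  have hop : ‖(T - S) x‖ * μ.real Set.univ ≤ ‖T - S‖ * ‖x‖ * μ.real Set.univ :=
    mul_le_mul_of_nonneg_right ((T - S).le_opNorm x) measureReal_nonneg
  linarith

end MeasureTheory

theorem norm_le_integral_div_of_perturbed_apply_le {Ω Ω' : Type*} [MeasurableSpace Ω]
    [MeasurableSpace Ω'] {μ : Measure Ω} {ν : Measure Ω'} [IsFiniteMeasure ν]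
    {A Al : Lp ℝ 1 μ →L[ℝ] Lp ℝ ∞ ν} {c η : ℝ}
    (hA : ∀ v : Lp ℝ 1 μ, 0 ≤ v → c * ∫ x, v x ∂μ ≤ ∫ y, (A v) y ∂ν)
    (hAl : ‖A - Al‖ ≤ η) (hη : η * ν.real Set.univ < c)
    {fu : Lp ℝ ∞ ν} {u : Lp ℝ 1 μ} (hu : 0 ≤ u) (hAlu : Al u ≤ fu) :
    ‖u‖ ≤ (∫ y, fu y ∂ν) / (c - η * ν.real Set.univ) := by
  have hgap : c * ‖u‖ ≤ ∫ y, fu y ∂ν + η * ‖u‖ * ν.real Set.univ :=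
    calc c * ‖u‖ = c * ∫ x, u x ∂μ := by rw [L1.norm_eq_integral_of_nonneg hu]
      _ ≤ ∫ y, A u y ∂ν := hA u hu
      _ ≤ ∫ y, Al u y ∂ν + ‖A - Al‖ * ‖u‖ * ν.real Set.univ :=
        integral_apply_le_integral_apply_add A Al u
      _ ≤ ∫ y, fu y ∂ν + η * ‖u‖ * ν.real Set.univ :=
        add_le_add (Lp.integral_mono_of_top hAlu) (by gcongr)
  rw [le_div_iff₀ (by linarith)]
  linarith

theorem feasible_set_bounded_perturbed_operator_general
    {Ω Ω' : Type*} [MeasurableSpace Ω] [MeasurableSpace Ω']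
    (μ : Measure Ω) (ν : Measure Ω') [IsFiniteMeasure ν]
    (A Al : Lp ℝ 1 μ →L[ℝ] Lp ℝ ⊤ ν)
    (c : ℝ)
    (hA : ∀ v : Lp ℝ 1 μ, 0 ≤ v → c * ∫ x, v x ∂μ ≤ ∫ y, (A v) y ∂ν)
    (η : ℝ) (hAl : ‖A - Al‖ ≤ η)
    (hη : η * (ν Set.univ).toReal < c) :
    ∀ fu : Lp ℝ ⊤ ν,
      (∀ u : Lp ℝ 1 μ, 0 ≤ u → Al u ≤ fu →
        ‖u‖ ≤ (∫ y, fu y ∂ν) / (c - η * (ν Set.univ).toReal)) ∧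
      Bornology.IsBounded {u : Lp ℝ 1 μ | 0 ≤ u ∧ Al u ≤ fu} := by
  intro fu
  have hnorm : ∀ u : Lp ℝ 1 μ, 0 ≤ u → Al u ≤ fu →
      ‖u‖ ≤ (∫ y, fu y ∂ν) / (c - η * (ν Set.univ).toReal) :=
    fun u hu hAlu => norm_le_integral_div_of_perturbed_apply_le hA hAl hη hu hAlu
  exact ⟨hnorm, isBounded_iff_forall_norm_le.2 ⟨_, fun u hu => hnorm u hu.1 hu.2⟩⟩

/-- If `A : L¹(μ) → L^∞(ν)` (with `ν` finite) satisfies `∫ Av dν ≥ c·∫ v dμ`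
for all `v ≥ 0`, and `A^l` is a perturbed operator with `‖A - A^l‖ ≤ η` where
`η·ν(Ω') < c`, then every `u ≥ 0` with `A^l u ≤ f^u` satisfies
`‖u‖₁ ≤ (∫ f^u dν)/(c - η·ν(Ω'))`; in particular the feasible set
`{u ≥ 0 : A^l u ≤ f^u}` is uniformly bounded in `L¹(μ)`. -/
theorem feasible_set_bounded_perturbed_operator
    {Ω Ω' : Type*} [MeasurableSpace Ω] [MeasurableSpace Ω']
    (μ : Measure Ω) (ν : Measure Ω') [IsFiniteMeasure ν]
    (A Al : Lp ℝ 1 μ →L[ℝ] Lp ℝ ⊤ ν)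
    (c : ℝ) (hc : 0 < c)
    (hA : ∀ v : Lp ℝ 1 μ, 0 ≤ v → c * ∫ x, v x ∂μ ≤ ∫ y, (A v) y ∂ν)
    (η : ℝ) (hAl : ‖A - Al‖ ≤ η)
    (hη : η * (ν Set.univ).toReal < c) :
    ∀ fu : Lp ℝ ⊤ ν,
      (∀ u : Lp ℝ 1 μ, 0 ≤ u → Al u ≤ fu →
        ‖u‖ ≤ (∫ y, fu y ∂ν) / (c - η * (ν Set.univ).toReal)) ∧
      Bornology.IsBounded {u : Lp ℝ 1 μ | 0 ≤ u ∧ Al u ≤ fu} :=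
  feasible_set_bounded_perturbed_operator_general μ ν A Al c hA η hAl hη
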